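/- Let n be a friend of 10. Then n has at least five distinct prime factors, i.e. ω(n) ≥ 5. -/

import Mathlib

open ArithmeticFunction
open scoped ArithmeticFunction.sigma

/-- The abundancy index `σ(n)/n` as a rational number. -/
noncomputable def abundancy (n : ℕ) : ℚ := (σ 1 n : ℚ) / n

/-- `m` is a friend of `n` if they are distinct positive integers with the same
abundancy index. -/
def IsFriend (m n : ℕ) : Prop := 0 < m ∧ 0 < n ∧ m ≠ n ∧ abundancy m = abundancy n

/-!
If `σ(n)/n = 9/5` then `5 ∣ n`, and `n` is odd: otherwise `10` would be a proper divisor of `n`,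
and the abundancy index, being `∑_{d ∣ n} 1/d`, strictly increases along proper divisibility.
Then `5σ(n) = 9n` makes `σ(n)` odd, so every exponent in `n` is even. This excludes `3 ∣ n`:
if `3^2 ∥ n` then `13 = σ(3^2)` divides `σ(n)`, hence `n`, and `3^2·5·13` already has
abundancy `28/15 > 9/5`; if `3^4 ∣ n` then so does `3^4·5^2`, of abundancy
`(121/81)(31/25) > 9/5`. Finally `σ(n)/n ≤ ∏_{p ∣ n} p/(p-1)`, and with at most four prime
factors, one of them `5` and the others at least `7` (at most one equal to `7`), this is at most
`(5/4)(7/6)(11/10)^2 < 9/5`.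
-/

open Finset

lemma abundancy_eq_sum_inv_divisors (n : ℕ) :
    abundancy n = ∑ d ∈ n.divisors, (d : ℚ)⁻¹ := by
  rcases eq_or_ne n 0 with rfl | hn
  · simp [abundancy]
  simp only [abundancy, sigma_eq_sum_div, pow_one, Nat.cast_sum, sum_div]
  refine sum_congr rfl fun d hd => ?_
  have hd0 : (d : ℚ) ≠ 0 := Nat.cast_ne_zero.mpr (Nat.pos_of_mem_divisors hd).ne'
  rw [Nat.cast_div (Nat.dvd_of_mem_divisors hd) hd0]
  field_simp

lemma abundancy_le_of_dvd {m n : ℕ} (hn : n ≠ 0) (h : m ∣ n) :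
    abundancy m ≤ abundancy n := by
  simp only [abundancy_eq_sum_inv_divisors]
  exact sum_le_sum_of_subset_of_nonneg (Nat.divisors_subset_of_dvd hn h) fun _ _ _ => by positivity

lemma abundancy_lt_of_dvd {m n : ℕ} (hn : n ≠ 0) (h : m ∣ n) (hmn : m ≠ n) :
    abundancy m < abundancy n := by
  simp only [abundancy_eq_sum_inv_divisors]
  refine sum_lt_sum_of_subset (Nat.divisors_subset_of_dvd hn h) (Nat.mem_divisors_self n hn)
    (fun hnm => hmn (Nat.dvd_antisymm h (Nat.dvd_of_mem_divisors hnm))) (by positivity)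
    fun _ _ _ => by positivity

lemma abundancy_mul {m n : ℕ} (h : m.Coprime n) :
    abundancy (m * n) = abundancy m * abundancy n := by
  rw [abundancy, abundancy, abundancy, isMultiplicative_sigma.map_mul_of_coprime h]
  push_cast
  exact mul_div_mul_comm _ _ _ _

lemma abundancy_prime_pow {p : ℕ} (hp : p.Prime) (k : ℕ) :
    abundancy (p ^ k) = ((p : ℚ) ^ (k + 1) - 1) / ((p - 1) * p ^ k) := by
  have hp1 : (p : ℚ) ≠ 1 := by exact_mod_cast hp.one_lt.ne'
  rw [abundancy, sigma_one_apply_prime_pow hp]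
  push_cast
  rw [geom_sum_eq hp1, div_div]

lemma abundancy_prime_pow_le {p : ℕ} (hp : p.Prime) (k : ℕ) :
    abundancy (p ^ k) ≤ p / (p - 1) := by
  have hp1 : (1 : ℚ) < p := by exact_mod_cast hp.one_lt
  rw [abundancy_prime_pow hp, div_le_div_iff₀ (by positivity) (by linarith), pow_succ]
  nlinarith [pow_pos (by linarith : (0 : ℚ) < p) k]

lemma abundancy_eq_prod_primeFactors {n : ℕ} (hn : n ≠ 0) :
    abundancy n = ∏ p ∈ n.primeFactors, abundancy (p ^ n.factorization p) := by
  have hprod : (n : ℚ) = ∏ p ∈ n.primeFactors, (p : ℚ) ^ n.factorization p := by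
    exact_mod_cast (Nat.prod_factorization_pow_eq_self hn).symm
  simp only [abundancy]
  rw [prod_div_distrib, isMultiplicative_sigma.multiplicative_factorization _ hn, hprod]
  push_cast
  rfl

lemma abundancy_le_prod_primeFactors (n : ℕ) :
    abundancy n ≤ ∏ p ∈ n.primeFactors, (p : ℚ) / (p - 1) := by
  rcases eq_or_ne n 0 with rfl | hn
  · simp [abundancy]
  rw [abundancy_eq_prod_primeFactors hn]
  refine prod_le_prod (fun p _ => ?_) fun p hp =>
    abundancy_prime_pow_le (Nat.prime_of_mem_primeFactors hp) _
  rw [abundancy]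
  positivity

lemma sigma_pow_factorization_dvd (n : ℕ) {p : ℕ} (hp : p.Prime) :
    σ 1 (p ^ n.factorization p) ∣ σ 1 n := by
  rcases eq_or_ne n 0 with rfl | hn
  · simp
  conv_rhs => rw [← Nat.ordProj_mul_ordCompl_eq_self n p]
  rw [isMultiplicative_sigma.map_mul_of_coprime ((Nat.coprime_ordCompl hp hn).pow_left _)]
  exact dvd_mul_right _ _

lemma even_of_odd_sigma_prime_pow {p k : ℕ} (hp : p.Prime) (hp2 : p ≠ 2)
    (h : Odd (σ 1 (p ^ k))) : Even k := by
  have hodd : ∀ i, Odd (p ^ i) := fun i => (hp.odd_of_ne_two hp2).pow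
  rw [sigma_one_apply_prime_pow hp, odd_sum_iff_odd_card_odd, filter_true_of_mem fun i _ => hodd i,
    card_range, Nat.odd_add_one, Nat.not_odd_iff_even] at h
  exact h

lemma even_factorization_of_odd_sigma {n : ℕ} (hn : Odd n) (hσ : Odd (σ 1 n)) (p : ℕ) :
    Even (n.factorization p) := by
  by_cases hp : p.Prime
  · rcases eq_or_ne p 2 with rfl | hp2
    · simp [Nat.factorization_eq_zero_of_not_dvd hn.not_two_dvd_nat]
    · exact even_of_odd_sigma_prime_pow hp hp2 (hσ.of_dvd_nat (sigma_pow_factorization_dvd n hp))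
  · simp [Nat.factorization_eq_zero_of_not_prime n hp]

lemma abundancy_ten : abundancy 10 = 9 / 5 := by
  rw [abundancy, show σ 1 10 = 18 by decide]
  norm_num

lemma Nat.Prime.sq_dvd_of_even_factorization {p n : ℕ} (hp : p.Prime) (hn : n ≠ 0) (h : p ∣ n)
    (he : Even (n.factorization p)) : p ^ 2 ∣ n := by
  have := hp.factorization_pos_of_dvd hn h
  rw [hp.pow_dvd_iff_le_factorization hn]
  obtain ⟨k, hk⟩ := he
  omega

lemma seven_le_of_mem_primeFactors {n p : ℕ} (hodd : Odd n) (h3 : ¬ 3 ∣ n)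
    (hp : p ∈ n.primeFactors) (hp5 : p ≠ 5) : 7 ≤ p := by
  have hpp := Nat.prime_of_mem_primeFactors hp
  have hpn := Nat.dvd_of_mem_primeFactors hp
  by_contra! hp7
  interval_cases p
  all_goals first | exact hodd.not_two_dvd_nat hpn | exact h3 hpn | exact hp5 rfl | norm_num at hpp

lemma eleven_le_of_prime {p : ℕ} (hp : p.Prime) (h7 : 7 < p) : 11 ≤ p := by
  by_contra! hp11
  interval_cases p <;> norm_num at *

lemma div_sub_one_le_of_le {a q : ℚ} (ha : 1 < a) (h : a ≤ q) :
    q / (q - 1) ≤ a / (a - 1) := by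
  rw [div_le_div_iff₀ (by linarith) (by linarith)]
  linarith

lemma prod_div_sub_one_le_pow {S : Finset ℕ} {a : ℚ} (ha : 1 < a) (h : ∀ q ∈ S, a ≤ q) :
    ∏ q ∈ S, (q : ℚ) / (q - 1) ≤ (a / (a - 1)) ^ #S := by
  rw [← prod_const]
  refine prod_le_prod (fun q hq => ?_) fun q hq => div_sub_one_le_of_le ha (h q hq)
  have := h q hq
  exact div_nonneg (by linarith) (by linarith)

lemma prod_div_sub_one_le_of_card_le_three {S : Finset ℕ} (hS : ∀ q ∈ S, q.Prime ∧ 7 ≤ q)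
    (hcard : #S ≤ 3) : ∏ q ∈ S, (q : ℚ) / (q - 1) ≤ 7 / 6 * (11 / 10) ^ 2 := by
  have h11 : ∀ q ∈ S, q ≠ 7 → (11 : ℚ) ≤ q := fun q hq h7 => by
    exact_mod_cast eleven_le_of_prime (hS q hq).1 (lt_of_le_of_ne (hS q hq).2 (Ne.symm h7))
  by_cases h7 : 7 ∈ S
  · have hS' : ∀ q ∈ S.erase 7, (11 : ℚ) ≤ q := fun q hq =>
      h11 q (mem_of_mem_erase hq) (ne_of_mem_erase hq)
    have hcard' : #(S.erase 7) ≤ 2 := by rw [card_erase_of_mem h7]; omega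
    rw [← mul_prod_erase _ _ h7]
    calc (7 : ℚ) / (7 - 1) * ∏ q ∈ S.erase 7, (q : ℚ) / (q - 1)
        ≤ 7 / 6 * (11 / 10) ^ #(S.erase 7) := by
          rw [show (7 : ℚ) / (7 - 1) = 7 / 6 by norm_num]
          gcongr
          exact (prod_div_sub_one_le_pow (by norm_num) hS').trans_eq (by norm_num)
      _ ≤ 7 / 6 * (11 / 10) ^ 2 := by gcongr; norm_num
  · calc ∏ q ∈ S, (q : ℚ) / (q - 1) ≤ (11 / 10) ^ #S := by
          convert prod_div_sub_one_le_pow (a := 11) (by norm_num)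
            fun q hq => h11 q hq fun h => h7 (h ▸ hq) using 2
          norm_num
      _ ≤ (11 / 10) ^ 3 := by gcongr; norm_num
      _ ≤ 7 / 6 * (11 / 10) ^ 2 := by norm_num

namespace FriendOfTen

variable {n : ℕ}

lemma five_mul_sigma_eq (hn : n ≠ 0) (hab : abundancy n = 9 / 5) : 5 * σ 1 n = 9 * n := by
  rw [abundancy, div_eq_div_iff (by exact_mod_cast hn) (by norm_num)] at hab
  exact_mod_cast (by push_cast; linarith : ((5 * σ 1 n : ℕ) : ℚ) = (9 * n : ℕ))

lemma dvd_of_dvd_sigma (hσ : 5 * σ 1 n = 9 * n) {q : ℕ} (hq : q.Coprime 9) (h : q ∣ σ 1 n) :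
    q ∣ n :=
  hq.dvd_of_dvd_mul_left (hσ ▸ dvd_mul_of_dvd_right h 5)

lemma five_dvd (hσ : 5 * σ 1 n = 9 * n) : 5 ∣ n :=
  Nat.Coprime.dvd_of_dvd_mul_left (by norm_num) (hσ ▸ dvd_mul_right 5 _)

lemma odd (hn : n ≠ 0) (hne : n ≠ 10) (hab : abundancy n = 9 / 5) : Odd n := by
  rw [Nat.odd_iff, ← Nat.two_dvd_ne_zero]
  intro h2
  have h10 : 2 * 5 ∣ n := Nat.Coprime.mul_dvd_of_dvd_of_dvd (by norm_num) h2
    (five_dvd (five_mul_sigma_eq hn hab))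
  have := abundancy_lt_of_dvd hn h10 (Ne.symm hne)
  rw [hab, show 2 * 5 = 10 from rfl, abundancy_ten] at this
  exact this.false

lemma not_three_pow_four_dvd (hn : n ≠ 0) (hab : abundancy n = 9 / 5)
    (hsq : ∀ p, Even (n.factorization p)) : ¬ 3 ^ 4 ∣ n := by
  intro h81
  have h25 : 5 ^ 2 ∣ n := Nat.prime_five.sq_dvd_of_even_factorization hn
    (five_dvd (five_mul_sigma_eq hn hab)) (hsq 5)
  have := abundancy_le_of_dvd hn (Nat.Coprime.mul_dvd_of_dvd_of_dvd (by norm_num) h81 h25)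
  rw [abundancy_mul (by norm_num), abundancy_prime_pow Nat.prime_three,
    abundancy_prime_pow Nat.prime_five, hab] at this
  norm_num at this

lemma factorization_three_ne_two (hn : n ≠ 0) (hab : abundancy n = 9 / 5) :
    n.factorization 3 ≠ 2 := by
  intro h3
  have hσ := five_mul_sigma_eq hn hab
  have h9 : 3 ^ 2 ∣ n := h3 ▸ Nat.ordProj_dvd n 3
  have h13 : 13 ^ 1 ∣ n := by
    refine (pow_one 13).symm ▸ dvd_of_dvd_sigma hσ (by norm_num) ?_
    have := sigma_pow_factorization_dvd n Nat.prime_three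
    rwa [h3, show σ 1 (3 ^ 2) = 13 by decide] at this
  have h5 : 5 ^ 1 ∣ n := (pow_one 5).symm ▸ five_dvd hσ
  have := abundancy_le_of_dvd hn (Nat.Coprime.mul_dvd_of_dvd_of_dvd (by norm_num)
    (Nat.Coprime.mul_dvd_of_dvd_of_dvd (by norm_num) h9 h5) h13)
  rw [abundancy_mul (by norm_num), abundancy_mul (by norm_num),
    abundancy_prime_pow Nat.prime_three, abundancy_prime_pow Nat.prime_five,
    abundancy_prime_pow (by norm_num : Nat.Prime 13), hab] at this
  norm_num at this

lemma not_three_dvd (hn : n ≠ 0) (hab : abundancy n = 9 / 5)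
    (hsq : ∀ p, Even (n.factorization p)) : ¬ 3 ∣ n := by
  intro h3
  have hpos := Nat.prime_three.factorization_pos_of_dvd hn h3
  have hne := factorization_three_ne_two hn hab
  obtain ⟨k, hk⟩ := hsq 3
  exact not_three_pow_four_dvd hn hab hsq
    ((Nat.prime_three.pow_dvd_iff_le_factorization hn).mpr (by omega))

end FriendOfTen

theorem friend_of_ten_omega_ge_five (n : ℕ) (hn : IsFriend n 10) :
    5 ≤ n.primeFactors.card := by
  obtain ⟨hn0, -, hne, hab⟩ := hn
  rw [abundancy_ten] at hab
  have hn : n ≠ 0 := hn0.ne'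
  have hσ := FriendOfTen.five_mul_sigma_eq hn hab
  have hodd : Odd n := FriendOfTen.odd hn hne hab
  have hσodd : Odd (σ 1 n) := (Nat.odd_mul.mp (hσ ▸ (by decide : Odd 9).mul hodd)).2
  have h3 := FriendOfTen.not_three_dvd hn hab (even_factorization_of_odd_sigma hodd hσodd)
  have h5 : 5 ∈ n.primeFactors :=
    Nat.mem_primeFactors.mpr ⟨Nat.prime_five, FriendOfTen.five_dvd hσ, hn⟩
  have hS : ∀ q ∈ n.primeFactors.erase 5, q.Prime ∧ 7 ≤ q := fun q hq =>
    ⟨Nat.prime_of_mem_primeFactors (mem_of_mem_erase hq),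
      seven_le_of_mem_primeFactors hodd h3 (mem_of_mem_erase hq) (ne_of_mem_erase hq)⟩
  by_contra! hcard
  have key : (9 / 5 : ℚ) ≤ 5 / (5 - 1) * (7 / 6 * (11 / 10) ^ 2) := calc
    (9 / 5 : ℚ) = abundancy n := hab.symm
    _ ≤ ∏ p ∈ n.primeFactors, (p : ℚ) / (p - 1) := abundancy_le_prod_primeFactors n
    _ = 5 / (5 - 1) * ∏ q ∈ n.primeFactors.erase 5, (q : ℚ) / (q - 1) :=
      (mul_prod_erase _ _ h5).symm
    _ ≤ 5 / (5 - 1) * (7 / 6 * (11 / 10) ^ 2) := by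
      gcongr
      exact prod_div_sub_one_le_of_card_le_three hS (by rw [card_erase_of_mem h5]; omega)
  norm_num at key
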